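/- Let E be a family of d-subsets of [n], let q, χ be positive integers with 1 ≤ q ≤ |E|-1 and χ ≤ min{|(∪_{i=1}^q e'_i)\e| : e, e'_1,...,e'_q distinct in E}, and let M be an (E,q,d+1,χ)-selector. Then for any hyperedge e* ∈ E and any q distinct hyperedges e'_1,...,e'_q ∈ E\{e*}, there exists a row index r of M such that M[r,j] = 0 for all j ∈ e*, and M[r,j] = 1 for some j ∈ (∪_{i=1}^q e'_i)\e*. Consequently, the non-adaptive strategy defined by M leaves at most q non-defective hyperedges undiscarded. -/

import Mathlib

/-- The `k` smallest elements of a finset of `Fin N`. -/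
def smallestK {N : ℕ} (s : Finset (Fin N)) (k : ℕ) : Finset (Fin N) :=
  ((s.sort (· ≤ ·)).take k).toFinset

/-!
A selector isolates at least `d + 1` columns of `S = e* ∪ T`, where `T` consists of the `χ`
smallest vertices of `(∪ F) \ e*`; since `|e*| = d`, one isolated column `j` lies in `T`, and the
row isolating it vanishes on `e*` while hitting `j`. So every `q`-subset of `E \ {e*}` contains a
discarded hyperedge, whence fewer than `q` hyperedges survive.
-/

theorem smallestK_subset {N : ℕ} (s : Finset (Fin N)) (k : ℕ) : smallestK s k ⊆ s := by
  intro x hx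
  simp only [smallestK, List.mem_toFinset] at hx
  exact (Finset.mem_sort _).mp (List.mem_of_mem_take hx)

namespace Finset

theorem card_filter_not_lt_of_forall_card_eq {α : Type*} {P : α → Prop} [DecidablePred P]
    {A : Finset α} {q : ℕ} (h : ∀ F ⊆ A, F.card = q → ∃ x ∈ F, P x) :
    (A.filter (¬ P ·)).card < q := by
  by_contra! hq
  obtain ⟨F, hFG, hFcard⟩ := exists_subset_card_eq hq
  obtain ⟨x, hxF, hPx⟩ := h F (hFG.trans (filter_subset _ _)) hFcard
  exact (mem_filter.mp (hFG hxF)).2 hPx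

end Finset

section Discards

variable {ι V : Type*} (M : ι → V → Bool)

def Discards (e s : Finset V) : Prop :=
  ∃ r, (∀ j ∈ e, M r j = false) ∧ ∃ j ∈ s, M r j = true

variable {M}

theorem Discards.mono {e s s' : Finset V} (h : Discards M e s) (hs : s ⊆ s') :
    Discards M e s' :=
  let ⟨r, hr0, j, hj, hr1⟩ := h
  ⟨r, hr0, j, hs hj, hr1⟩

theorem discards_sup_iff [DecidableEq V] {κ : Type*} {e : Finset V} {F : Finset κ}
    {f : κ → Finset V} : Discards M e (F.sup f) ↔ ∃ x ∈ F, Discards M e (f x) := by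
  simp only [Discards, Finset.mem_sup]
  grind

theorem discards_of_isolated [DecidableEq V] {e T J : Finset V} (hJ : J ⊆ e ∪ T)
    (hcard : e.card < J.card)
    (hiso : ∀ j ∈ J, ∃ r, M r j = true ∧ ∀ j' ∈ e ∪ T, j' ≠ j → M r j' = false) :
    Discards M e T := by
  obtain ⟨j, hjJ, hje⟩ := Finset.not_subset.mp fun h => (Finset.card_le_card h).not_gt hcard
  have hjT : j ∈ T := (Finset.mem_union.mp (hJ hjJ)).resolve_left hje
  obtain ⟨r, hr1, hr0⟩ := hiso j hjJ
  exact ⟨r, fun j' hj' => hr0 j' (Finset.mem_union_left _ hj') (ne_of_mem_of_not_mem hj' hje),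
    j, hjT, hr1⟩

end Discards

theorem q_selector_discards_general (t n d q χ : ℕ)
    (E : Finset (Finset (Fin n)))
    (hEd : ∀ e ∈ E, e.card = d)
    (M : Fin t → Fin n → Bool)
    (hsel : ∀ e ∈ E, ∀ F ⊆ E.erase e, F.card = q →
      ∃ J ⊆ e ∪ smallestK ((F.sup id) \ e) χ, d + 1 ≤ J.card ∧
        ∀ j ∈ J, ∃ r : Fin t, M r j = true ∧
          ∀ j' ∈ e ∪ smallestK ((F.sup id) \ e) χ, j' ≠ j → M r j' = false) :
    (∀ estar ∈ E, ∀ F ⊆ E.erase estar, F.card = q →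
      ∃ r : Fin t, (∀ j ∈ estar, M r j = false) ∧
        ∃ j ∈ (F.sup id) \ estar, M r j = true) ∧
    (∀ estar ∈ E, ∃ G ⊆ E.erase estar, G.card ≤ q ∧
      ∀ e' ∈ E.erase estar, e' ∉ G →
        ∃ r : Fin t, (∀ j ∈ estar, M r j = false) ∧ ∃ j ∈ e', M r j = true) := by
  classical
  have hunion : ∀ estar ∈ E, ∀ F ⊆ E.erase estar, F.card = q →
      Discards M estar ((F.sup id) \ estar) := by
    intro estar hestar F hF hFcard
    obtain ⟨J, hJ, hJcard, hiso⟩ := hsel estar hestar F hF hFcard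
    exact (discards_of_isolated hJ (by rw [hEd estar hestar]; omega) hiso).mono
      (smallestK_subset _ _)
  refine ⟨hunion, fun estar hestar => ⟨(E.erase estar).filter (¬ Discards M estar ·),
    Finset.filter_subset _ _, ?_, fun e' he' hG => ?_⟩⟩
  · refine (Finset.card_filter_not_lt_of_forall_card_eq fun F hF hFcard => ?_).le
    exact discards_sup_iff.mp ((hunion estar hestar F hF hFcard).mono Finset.sdiff_subset)
  · by_contra h
    exact hG (Finset.mem_filter.mpr ⟨he', h⟩)

/-- Let `M` be an `(E,q,d+1,χ)`-selector, where
`χ ≤ min{|(∪ᵢ e'ᵢ)\e| : e,e'_1,...,e'_q distinct in E}` and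
`S_{e,(e'_1,...,e'_q),χ} = e ∪ {χ smallest elements of (∪ᵢ e'ᵢ)\e}`.  Then for any
`e* ∈ E` and any `q` distinct hyperedges of `E \ {e*}` (given as a `q`-subset `F`
of `E.erase e*`, with union `F.sup id`) there is a row `r` with `M[r,j] = 0` for
all `j ∈ e*` and `M[r,j] = 1` for some `j ∈ (∪ F)\e*`; consequently at most `q`
non-defective hyperedges remain undiscarded. -/
theorem q_selector_discards (t n d q χ : ℕ) (hq : 1 ≤ q) (hχ : 0 < χ)
    (E : Finset (Finset (Fin n))) (hqE : q ≤ E.card - 1)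
    (hEd : ∀ e ∈ E, e.card = d)
    (hχmin : ∀ e ∈ E, ∀ F ⊆ E.erase e, F.card = q → χ ≤ ((F.sup id) \ e).card)
    (M : Fin t → Fin n → Bool)
    (hsel : ∀ e ∈ E, ∀ F ⊆ E.erase e, F.card = q →
      ∃ J ⊆ e ∪ smallestK ((F.sup id) \ e) χ, d + 1 ≤ J.card ∧
        ∀ j ∈ J, ∃ r : Fin t, M r j = true ∧
          ∀ j' ∈ e ∪ smallestK ((F.sup id) \ e) χ, j' ≠ j → M r j' = false) :
    (∀ estar ∈ E, ∀ F ⊆ E.erase estar, F.card = q →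
      ∃ r : Fin t, (∀ j ∈ estar, M r j = false) ∧
        ∃ j ∈ (F.sup id) \ estar, M r j = true) ∧
    (∀ estar ∈ E, ∃ G ⊆ E.erase estar, G.card ≤ q ∧
      ∀ e' ∈ E.erase estar, e' ∉ G →
        ∃ r : Fin t, (∀ j ∈ estar, M r j = false) ∧ ∃ j ∈ e', M r j = true) :=
  q_selector_discards_general t n d q χ E hEd M hsel
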